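/- arXiv:2504.20917 — 3 statements merged into one kernel-verified Lean document; each statement's English description precedes it below -/
import Mathlib

section
/- Let (𝔤,𝔨) be a symmetric pair with 𝔭 the (−1)-eigenspace of the involution and B a nondegenerate invariant form. If dim 𝔭 is odd, then dim 𝔞 is odd, where 𝔞 = 𝔥 ∩ 𝔭 for a fundamental Cartan subalgebra 𝔥 = 𝔱 ⊕ 𝔞; more generally, dim 𝔭 and dim 𝔞 have the same parity, since 𝔮 = 𝔭 ∩ (𝔫⁺ ⊕ 𝔫⁻) is even dimensional (it is a direct sum of a subspace and its B-dual isotropic partner). -/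
lemma aux_le (P : Type*) [AddCommGroup P] [Module ℂ P] [FiniteDimensional ℂ P]
    (B : LinearMap.BilinForm ℂ P) (qp qm : Submodule ℂ P)
    (hdualP : ∀ x ∈ qp, x ≠ 0 → ∃ y ∈ qm, B x y ≠ 0) :
    Module.finrank ℂ qp ≤ Module.finrank ℂ qm := by
  let g : qp →ₗ[ℂ] Module.Dual ℂ qm :=
    LinearMap.compl₂ (B ∘ₗ qp.subtype) qm.subtype
  have hinj : Function.Injective g := by
    rw [← LinearMap.ker_eq_bot, LinearMap.ker_eq_bot']
    intro x hx
    by_contra hne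
    obtain ⟨y, hy, hBy⟩ := hdualP x x.2 (by simpa using Subtype.coe_ne_coe.mpr hne)
    have := LinearMap.congr_fun hx ⟨y, hy⟩
    simp [g] at this
    exact hBy this
  calc Module.finrank ℂ qp ≤ Module.finrank ℂ (Module.Dual ℂ qm) :=
        LinearMap.finrank_le_finrank_of_injective hinj
    _ = Module.finrank ℂ qm := Subspace.dual_finrank_eq

/-- Let `(𝔤,𝔨)` be a symmetric pair with `𝔭` the `(-1)`-eigenspace of the
involution and `B` a nondegenerate invariant symmetric form.  Abstracting the relevant linear
algebra: `𝔭` decomposes as `𝔭 = 𝔞 ⊕ 𝔮` with `𝔮 = 𝔮⁺ ⊕ 𝔮⁻`, where `𝔮⁺`, `𝔮⁻` are isotropic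
subspaces in perfect duality under `B`.  Then `𝔮 = 𝔮⁺ ⊕ 𝔮⁻` is even dimensional, hence
`dim 𝔭` and `dim 𝔞` have the same parity (in particular, if `dim 𝔭` is odd then so is
`dim 𝔞`). -/
theorem stmt5 (P : Type*) [AddCommGroup P] [Module ℂ P] [FiniteDimensional ℂ P]
    (B : LinearMap.BilinForm ℂ P) (hsymm : B.IsSymm) (hnd : B.Nondegenerate)
    (a qp qm : Submodule ℂ P)
    (hcompl : IsCompl a (qp ⊔ qm)) (hdisj : Disjoint qp qm)
    (hisoP : ∀ x ∈ qp, ∀ y ∈ qp, B x y = 0)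
    (hisoM : ∀ x ∈ qm, ∀ y ∈ qm, B x y = 0)
    (hdualP : ∀ x ∈ qp, x ≠ 0 → ∃ y ∈ qm, B x y ≠ 0)
    (hdualM : ∀ y ∈ qm, y ≠ 0 → ∃ x ∈ qp, B x y ≠ 0) :
    Even (Module.finrank ℂ ↥(qp ⊔ qm)) ∧
      Module.finrank ℂ P % 2 = Module.finrank ℂ ↥a % 2 := by
  have h1 : Module.finrank ℂ qp ≤ Module.finrank ℂ qm := aux_le P B qp qm hdualP
  have h2 : Module.finrank ℂ qm ≤ Module.finrank ℂ qp := by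
    refine aux_le P B.flip qm qp ?_
    intro y hy hne
    obtain ⟨x, hx, hBx⟩ := hdualM y hy hne
    exact ⟨x, hx, hBx⟩
  have heq := le_antisymm h1 h2
  have hsum : Module.finrank ℂ ↥(qp ⊔ qm) + Module.finrank ℂ ↥(qp ⊓ qm)
      = Module.finrank ℂ qp + Module.finrank ℂ qm :=
    Submodule.finrank_sup_add_finrank_inf_eq qp qm
  rw [hdisj.eq_bot, finrank_bot, add_zero] at hsum
  have heven : Even (Module.finrank ℂ ↥(qp ⊔ qm)) := by
    rw [hsum, heq]; exact Even.add_self _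
  refine ⟨heven, ?_⟩
  have htot : Module.finrank ℂ ↥a + Module.finrank ℂ ↥(qp ⊔ qm) = Module.finrank ℂ P :=
    Submodule.finrank_add_eq_of_isCompl hcompl
  obtain ⟨k, hk⟩ := heven
  omega
end

section
/- Let (𝔤,𝔨) be a symmetric pair with 𝔭 the (−1)-eigenspace. In the noncommutative Weil algebra W̃(𝔤), the algebra map ψ_rel : W̃(𝔤) → ℂ[t,dt] ⊗ W̃(𝔤) determined on degree-1 generators by ψ_rel(μ) = 1⊗μ − t⊗μ_𝔭 (where μ = μ_𝔨 + μ_𝔭 is the decomposition along 𝔤* = 𝔨* ⊕ 𝔭*) and extended as a morphism of differential algebras satisfies: for μ ∈ 𝔨*, ψ_rel(μ̂) = 1⊗μ̂ + (2t − t²)⊗δ_𝔭(μ), and for μ ∈ 𝔭*, ψ_rel(μ̂) = (1−t)⊗μ̂ − dt⊗μ. -/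
/-- The noncommutative Weil algebra `W̃(𝔤) = T(𝔤*[-2] ⊕ 𝔤*[-1])`, realized as the tensor
algebra on `𝔤* × 𝔤*`. -/
noncomputable abbrev WeilNC (G : Type*) [AddCommGroup G] [Module ℂ G] :=
  TensorAlgebra ℂ (Module.Dual ℂ G × Module.Dual ℂ G)

/-- The degree-1 generator `μ ∈ 𝔤*[-1]` of `W̃(𝔤)`. -/
noncomputable def gen1 {G : Type*} [AddCommGroup G] [Module ℂ G]
    (μ : Module.Dual ℂ G) : WeilNC G :=
  TensorAlgebra.ι ℂ (μ, 0)

/-- The degree-2 generator `μ̄ ∈ 𝔤*[-2]` of `W̃(𝔤)`. -/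
noncomputable def gen2 {G : Type*} [AddCommGroup G] [Module ℂ G]
    (μ : Module.Dual ℂ G) : WeilNC G :=
  TensorAlgebra.ι ℂ (0, μ)

/-- For a projection `π` of `𝔤`, the element
`-(1/2) ∑_{a,c} μ([π e_a, π e_c]) • f_a ⊗ f_c ∈ T²(𝔤*[-1]) ⊂ W̃(𝔤)`.
For `π = id` this is `δ_𝔤(μ)`; for `π = π_𝔭` (projection onto `𝔭` along `𝔨` in a symmetric
pair `𝔤 = 𝔨 ⊕ 𝔭`) and `μ ∈ 𝔨*` this is the component `δ_𝔭(μ) ∈ T²(𝔭*[-1])`. -/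
noncomputable def deltaWith {G : Type*} [LieRing G] [LieAlgebra ℂ G]
    (π : G →ₗ[ℂ] G) {ιI : Type*} [Fintype ιI] (b : Module.Basis ιI ℂ G)
    (μ : Module.Dual ℂ G) : WeilNC G :=
  (-(1 : ℂ) / 2) • ∑ a, ∑ c, μ ⁅π (b a), π (b c)⁆ •
    (gen1 (b.coord a) * gen1 (b.coord c))


/-! With `β = μ⁅·,·⁆` and `F = inc ∘ gen1`, `inc (δ_π(μ)) = -½ ∑ β(π eₐ, π e_c) F(fₐ) F(f_c)`,
and replacing `F` by `F ∘ P*` in one slot amounts to precomposing `β` with `P` in that slot.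
Since `ψ(gen1 ν) = F ν - t F(π_𝔭* ν)` with `t` central, `ψ(δ_𝔤(μ))` splits into four such sums,
for `β`, `β(·, π_𝔭 ·)`, `β(π_𝔭 ·, ·)` and `β(π_𝔭 ·, π_𝔭 ·)`. The bracket relations of the
symmetric pair identify them: for `μ ∈ 𝔨*` the last three coincide (the form of `δ_𝔭(μ)`), which
produces the coefficient `2t - t²`; for `μ ∈ 𝔭*` the last one vanishes and the middle two add up
to `β`, which produces the factor `1 - t`. -/

namespace Module.Basis

variable {R M A ι : Type*} [CommRing R] [AddCommGroup M] [Module R M] [Ring A] [Algebra R A]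
  [Fintype ι] (b : Basis ι R M)

-- The image of the tensor `∑ β(bᵢ, bⱼ) b.coord i ⊗ b.coord j ∈ M* ⊗ M*` representing `β`
-- under `F₁ ⊗ F₂` followed by multiplication in `A`.
noncomputable def bilinSum (β : M →ₗ[R] M →ₗ[R] R) (F₁ F₂ : Module.Dual R M →ₗ[R] A) : A :=
  ∑ i, ∑ j, β (b i) (b j) • (F₁ (b.coord i) * F₂ (b.coord j))

variable {b}

theorem bilinSum_eq_sum_right (β : M →ₗ[R] M →ₗ[R] R) (F₁ F₂ : Module.Dual R M →ₗ[R] A) :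
    b.bilinSum β F₁ F₂ = ∑ i, F₁ (b.coord i) * F₂ (β (b i)) := by
  refine Finset.sum_congr rfl fun i _ => ?_
  conv_rhs => rw [← b.sum_dual_apply_smul_coord (β (b i))]
  simp only [map_sum, map_smul, Finset.mul_sum, mul_smul_comm]

theorem bilinSum_eq_sum_left (β : M →ₗ[R] M →ₗ[R] R) (F₁ F₂ : Module.Dual R M →ₗ[R] A) :
    b.bilinSum β F₁ F₂ = ∑ j, F₁ (β.flip (b j)) * F₂ (b.coord j) := by
  rw [bilinSum, Finset.sum_comm]
  refine Finset.sum_congr rfl fun j _ => ?_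
  conv_rhs => rw [← b.sum_dual_apply_smul_coord (β.flip (b j))]
  simp only [map_sum, map_smul, Finset.sum_mul, smul_mul_assoc, LinearMap.flip_apply]

theorem bilinSum_comp_dualMap_right (β : M →ₗ[R] M →ₗ[R] R) (Q : M →ₗ[R] M)
    (F₁ F₂ : Module.Dual R M →ₗ[R] A) :
    b.bilinSum β F₁ (F₂ ∘ₗ Q.dualMap) = b.bilinSum (β.compl₂ Q) F₁ F₂ := by
  simp only [bilinSum_eq_sum_right, LinearMap.comp_apply, LinearMap.dualMap_apply']
  rfl

theorem bilinSum_comp_dualMap_left (β : M →ₗ[R] M →ₗ[R] R) (P : M →ₗ[R] M)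
    (F₁ F₂ : Module.Dual R M →ₗ[R] A) :
    b.bilinSum β (F₁ ∘ₗ P.dualMap) F₂ = b.bilinSum (β ∘ₗ P) F₁ F₂ := by
  simp only [bilinSum_eq_sum_left, LinearMap.comp_apply, LinearMap.dualMap_apply']
  rfl

theorem bilinSum_add (β₁ β₂ : M →ₗ[R] M →ₗ[R] R) (F₁ F₂ : Module.Dual R M →ₗ[R] A) :
    b.bilinSum (β₁ + β₂) F₁ F₂ = b.bilinSum β₁ F₁ F₂ + b.bilinSum β₂ F₁ F₂ := by
  simp only [bilinSum_eq_sum_right, LinearMap.add_apply, map_add, mul_add,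
    Finset.sum_add_distrib]

@[simp]
theorem bilinSum_zero (F₁ F₂ : Module.Dual R M →ₗ[R] A) : b.bilinSum 0 F₁ F₂ = 0 := by
  simp [bilinSum]

theorem map_bilinSum {B : Type*} [Ring B] [Algebra R B] (f : A →ₐ[R] B)
    (β : M →ₗ[R] M →ₗ[R] R) (F₁ F₂ : Module.Dual R M →ₗ[R] A) :
    f (b.bilinSum β F₁ F₂) = b.bilinSum β (f.toLinearMap ∘ₗ F₁) (f.toLinearMap ∘ₗ F₂) := by
  simp [bilinSum]

theorem bilinSum_sub_mul_central {t : A} (ht : ∀ z : A, Commute t z) (β : M →ₗ[R] M →ₗ[R] R)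
    (F G H : Module.Dual R M →ₗ[R] A) (hH : ∀ ν, H ν = F ν - t * G ν) :
    b.bilinSum β H H = b.bilinSum β F F - t * b.bilinSum β F G - t * b.bilinSum β G F
      + t ^ 2 * b.bilinSum β G G := by
  have hexpand : ∀ ν ν', H ν * H ν' = F ν * F ν' - t * (F ν * G ν') - t * (G ν * F ν')
      + t ^ 2 * (G ν * G ν') := by
    intro ν ν'
    have hmove : ∀ x y : A, x * (t * y) = t * (x * y) := fun x y => by
      rw [← mul_assoc, ← (ht x).eq, mul_assoc]
    simp only [hH, sub_mul, mul_sub, mul_assoc, hmove, sq]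
    abel
  simp only [bilinSum, hexpand, smul_add, smul_sub, mul_smul_comm, Finset.sum_add_distrib,
    Finset.sum_sub_distrib, Finset.mul_sum]

end Module.Basis

section SymmetricPair

variable {R L : Type*} [CommRing R] [LieRing L] [LieAlgebra R L]

noncomputable def bracketForm (μ : Module.Dual R L) : L →ₗ[R] L →ₗ[R] R :=
  (LieAlgebra.ad R L : L →ₗ[R] Module.End R L).compr₂ μ

@[simp]
theorem bracketForm_apply (μ : Module.Dual R L) (x y : L) : bracketForm μ x y = μ ⁅x, y⁆ :=
  rfl

theorem LinearMap.comp_eq_self_of_add_eq_id {M N : Type*} [AddCommGroup M] [Module R M]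
    [AddCommGroup N] [Module R N] {π₁ π₂ : M →ₗ[R] M} (hsum : π₁ + π₂ = LinearMap.id)
    {μ : M →ₗ[R] N} (hμ : μ ∘ₗ π₁ = 0) : μ ∘ₗ π₂ = μ := by
  simpa [LinearMap.comp_add, hμ] using congr_arg (μ ∘ₗ ·) hsum

variable {πk πp : L →ₗ[R] L} (hsum : πk + πp = LinearMap.id) {μ : Module.Dual R L}
include hsum

theorem bracketForm_compl₂_eq_compl₁₂ (hkp : ∀ x y : L, πk ⁅πk x, πp y⁆ = 0)
    (hμ : μ ∘ₗ πp = 0) : (bracketForm μ).compl₂ πp = (bracketForm μ).compl₁₂ πp πp := by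
  have hμk := LinearMap.congr_fun (LinearMap.comp_eq_self_of_add_eq_id (add_comm πk πp ▸ hsum) hμ)
  ext x y
  have hx : πk x + πp x = x := LinearMap.congr_fun hsum x
  simp only [LinearMap.compl₂_apply, LinearMap.compl₁₂_apply, bracketForm_apply]
  conv_lhs => rw [← hx, add_lie, map_add, ← hμk, LinearMap.comp_apply, hkp, map_zero, zero_add]

theorem bracketForm_comp_eq_compl₁₂ (hpk : ∀ x y : L, πk ⁅πp x, πk y⁆ = 0)
    (hμ : μ ∘ₗ πp = 0) : bracketForm μ ∘ₗ πp = (bracketForm μ).compl₁₂ πp πp := by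
  have hμk := LinearMap.congr_fun (LinearMap.comp_eq_self_of_add_eq_id (add_comm πk πp ▸ hsum) hμ)
  ext x y
  have hy : πk y + πp y = y := LinearMap.congr_fun hsum y
  simp only [LinearMap.comp_apply, LinearMap.compl₁₂_apply, bracketForm_apply]
  conv_lhs => rw [← hy, lie_add, map_add, ← hμk, LinearMap.comp_apply, hpk, map_zero, zero_add]

theorem bracketForm_compl₁₂_eq_zero (hpp : ∀ x y : L, πp ⁅πp x, πp y⁆ = 0)
    (hμ : μ ∘ₗ πk = 0) : (bracketForm μ).compl₁₂ πp πp = 0 := by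
  have hμp := LinearMap.congr_fun (LinearMap.comp_eq_self_of_add_eq_id hsum hμ)
  ext x y
  simp [← hμp ⁅πp x, πp y⁆, hpp]

theorem bracketForm_compl₂_add_comp (hkk : ∀ x y : L, πp ⁅πk x, πk y⁆ = 0)
    (hpp : ∀ x y : L, πp ⁅πp x, πp y⁆ = 0) (hμ : μ ∘ₗ πk = 0) :
    (bracketForm μ).compl₂ πp + bracketForm μ ∘ₗ πp = bracketForm μ := by
  have hμp := LinearMap.congr_fun (LinearMap.comp_eq_self_of_add_eq_id hsum hμ)
  have hpp' : ∀ x y : L, μ ⁅πp x, πp y⁆ = 0 := fun x y => by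
    simpa using LinearMap.congr_fun₂ (bracketForm_compl₁₂_eq_zero hsum hpp hμ) x y
  ext x y
  have hx : πk x + πp x = x := LinearMap.congr_fun hsum x
  have hy : πk y + πp y = y := LinearMap.congr_fun hsum y
  have hkk' : μ ⁅πk x, πk y⁆ = 0 := by rw [← hμp, LinearMap.comp_apply, hkk, map_zero]
  have key : μ ⁅πk x + πp x, πp y⁆ + μ ⁅πp x, πk y + πp y⁆ =
      μ ⁅πk x + πp x, πk y + πp y⁆ := by
    simp only [add_lie, lie_add, map_add, hkk', hpp']
    ring
  simpa [hx, hy] using key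

end SymmetricPair

noncomputable def gen1ₗ (G : Type*) [AddCommGroup G] [Module ℂ G] :
    Module.Dual ℂ G →ₗ[ℂ] WeilNC G :=
  TensorAlgebra.ι ℂ ∘ₗ LinearMap.inl ℂ _ _

@[simp]
theorem gen1_zero {G : Type*} [AddCommGroup G] [Module ℂ G] :
    gen1 (0 : Module.Dual ℂ G) = 0 :=
  map_zero (gen1ₗ G)

@[simp]
theorem gen2_zero {G : Type*} [AddCommGroup G] [Module ℂ G] :
    gen2 (0 : Module.Dual ℂ G) = 0 :=
  map_zero (TensorAlgebra.ι ℂ)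

section Weil

variable {G : Type*} [LieRing G] [LieAlgebra ℂ G] {ιI : Type*} [Fintype ιI]
  (b : Module.Basis ιI ℂ G) {W : Type*} [Ring W] [Algebra ℂ W]

theorem deltaWith_eq_bilinSum (π : G →ₗ[ℂ] G) (μ : Module.Dual ℂ G) :
    deltaWith π b μ =
      (-(1 : ℂ) / 2) • b.bilinSum ((bracketForm μ).compl₁₂ π π) (gen1ₗ G) (gen1ₗ G) :=
  rfl

theorem map_deltaWith (f : WeilNC G →ₐ[ℂ] W) (π : G →ₗ[ℂ] G) (μ : Module.Dual ℂ G) :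
    f (deltaWith π b μ) = (-(1 : ℂ) / 2) •
      b.bilinSum ((bracketForm μ).compl₁₂ π π) (f.toLinearMap ∘ₗ gen1ₗ G)
        (f.toLinearMap ∘ₗ gen1ₗ G) := by
  rw [deltaWith_eq_bilinSum, map_smul, Module.Basis.map_bilinSum]

theorem map_deltaWith_id_of_map_gen1 {t : W} (ht : ∀ z : W, Commute t z) {πp : G →ₗ[ℂ] G}
    (ψ : WeilNC G →ₐ[ℂ] W) (F : Module.Dual ℂ G →ₗ[ℂ] W)
    (hψ1 : ∀ μ : Module.Dual ℂ G, ψ (gen1 μ) = F μ - t * F (μ ∘ₗ πp))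
    (μ : Module.Dual ℂ G) :
    ψ (deltaWith LinearMap.id b μ) = (-(1 : ℂ) / 2) • (b.bilinSum (bracketForm μ) F F
      - t * b.bilinSum ((bracketForm μ).compl₂ πp) F F
      - t * b.bilinSum (bracketForm μ ∘ₗ πp) F F
      + t ^ 2 * b.bilinSum ((bracketForm μ).compl₁₂ πp πp) F F) := by
  rw [map_deltaWith, LinearMap.compl₁₂_id_id,
    Module.Basis.bilinSum_sub_mul_central ht _ F (F ∘ₗ πp.dualMap) _ hψ1,
    Module.Basis.bilinSum_comp_dualMap_right, Module.Basis.bilinSum_comp_dualMap_left,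
    Module.Basis.bilinSum_comp_dualMap_left, Module.Basis.bilinSum_comp_dualMap_right]
  rfl

end Weil

theorem stmt13_general (G : Type*) [LieRing G] [LieAlgebra ℂ G]
    (πk πp : G →ₗ[ℂ] G)
    (hsum : πk + πp = LinearMap.id)
    (hkk : ∀ x y : G, πp ⁅πk x, πk y⁆ = 0)
    (hkp : ∀ x y : G, πk ⁅πk x, πp y⁆ = 0)
    (hpk : ∀ x y : G, πk ⁅πp x, πk y⁆ = 0)
    (hpp : ∀ x y : G, πp ⁅πp x, πp y⁆ = 0)
    (ιI : Type*) [Fintype ιI] (b : Module.Basis ιI ℂ G)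
    (W : Type*) [Ring W] [Algebra ℂ W]
    (t dt : W) (inc : WeilNC G →ₐ[ℂ] W)
    (ht : ∀ z : W, Commute t z)
    (ψ : WeilNC G →ₐ[ℂ] W)
    (hψ1 : ∀ μ : Module.Dual ℂ G,
      ψ (gen1 μ) = inc (gen1 μ) - t * inc (gen1 (μ ∘ₗ πp)))
    (hψ2 : ∀ μ : Module.Dual ℂ G,
      ψ (gen2 μ) = inc (gen2 μ) - dt * inc (gen1 (μ ∘ₗ πp)) - t * inc (gen2 (μ ∘ₗ πp)))
    (μ : Module.Dual ℂ G) :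
    (μ ∘ₗ πp = 0 →
      ψ (gen2 μ - deltaWith LinearMap.id b μ) =
        inc (gen2 μ - deltaWith LinearMap.id b μ) +
          (2 * t - t ^ 2) * inc (deltaWith πp b μ)) ∧
    (μ ∘ₗ πk = 0 →
      ψ (gen2 μ - deltaWith LinearMap.id b μ) =
        (1 - t) * inc (gen2 μ - deltaWith LinearMap.id b μ) - dt * inc (gen1 μ)) := by
  set F := inc.toLinearMap ∘ₗ gen1ₗ G
  have hψδ := map_deltaWith_id_of_map_gen1 b ht ψ F hψ1 μ
  have hincδ :
      inc (deltaWith LinearMap.id b μ) = (-(1 : ℂ) / 2) • b.bilinSum (bracketForm μ) F F := by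
    rw [map_deltaWith, LinearMap.compl₁₂_id_id]
  constructor
  · intro hμ
    have hψgen2 : ψ (gen2 μ) = inc (gen2 μ) := by simp [hψ2, hμ]
    rw [bracketForm_compl₂_eq_compl₁₂ hsum hkp hμ, bracketForm_comp_eq_compl₁₂ hsum hpk hμ] at hψδ
    rw [map_sub, map_sub, hψgen2, hψδ, hincδ, map_deltaWith, mul_smul_comm, sub_mul, two_mul,
      add_mul]
    module
  · intro hμ
    have hsplit : b.bilinSum (bracketForm μ) F F =
        b.bilinSum ((bracketForm μ).compl₂ πp) F F + b.bilinSum (bracketForm μ ∘ₗ πp) F F := by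
      rw [← Module.Basis.bilinSum_add, bracketForm_compl₂_add_comp hsum hkk hpp hμ]
    rw [bracketForm_compl₁₂_eq_zero hsum hpp hμ, Module.Basis.bilinSum_zero] at hψδ
    rw [map_sub, map_sub, hψ2, LinearMap.comp_eq_self_of_add_eq_id hsum hμ, hψδ, hincδ, hsplit,
      mul_zero, add_zero, sub_mul, one_mul, mul_sub, mul_smul_comm, mul_add]
    module

/-- Let `(𝔤,𝔨)` be a symmetric pair, `𝔤 = 𝔨 ⊕ 𝔭` (encoded by complementary
projections `πk`, `πp` with `[𝔨,𝔨] ⊆ 𝔨`, `[𝔨,𝔭] ⊆ 𝔭`, `[𝔭,𝔭] ⊆ 𝔨`).  Let `ψ_rel` be the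
algebra morphism `W̃(𝔤) → ℂ[t,dt] ⊗ W̃(𝔤)` (the target is `W`, with `1 ⊗ -` given by the
algebra map `inc`, and central even element `t` and odd element `dt`) determined on degree-1
generators by `ψ_rel(μ) = 1⊗μ - t⊗μ_𝔭`, extended as a morphism of differential algebras (so
`ψ_rel(μ̄) = 1⊗μ̄ - dt⊗μ_𝔭 - t⊗μ̄_𝔭`).  Then, on the curvature generators `μ̂ = μ̄ - δ_𝔤(μ)`:
for `μ ∈ 𝔨*`, `ψ_rel(μ̂) = 1 ⊗ μ̂ + (2t - t²) ⊗ δ_𝔭(μ)`, and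
for `μ ∈ 𝔭*`, `ψ_rel(μ̂) = (1 - t) ⊗ μ̂ - dt ⊗ μ`. -/
theorem stmt13 (G : Type*) [LieRing G] [LieAlgebra ℂ G]
    (πk πp : G →ₗ[ℂ] G)
    (hsum : πk + πp = LinearMap.id)
    (hortho : πk ∘ₗ πp = 0) (hortho' : πp ∘ₗ πk = 0)
    (hkk : ∀ x y : G, πp ⁅πk x, πk y⁆ = 0)
    (hkp : ∀ x y : G, πk ⁅πk x, πp y⁆ = 0)
    (hpk : ∀ x y : G, πk ⁅πp x, πk y⁆ = 0)
    (hpp : ∀ x y : G, πp ⁅πp x, πp y⁆ = 0)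
    (ιI : Type*) [Fintype ιI] (b : Module.Basis ιI ℂ G)
    (W : Type*) [Ring W] [Algebra ℂ W]
    (t dt : W) (inc : WeilNC G →ₐ[ℂ] W)
    (ht : ∀ z : W, Commute t z)
    (ψ : WeilNC G →ₐ[ℂ] W)
    (hψ1 : ∀ μ : Module.Dual ℂ G,
      ψ (gen1 μ) = inc (gen1 μ) - t * inc (gen1 (μ ∘ₗ πp)))
    (hψ2 : ∀ μ : Module.Dual ℂ G,
      ψ (gen2 μ) = inc (gen2 μ) - dt * inc (gen1 (μ ∘ₗ πp)) - t * inc (gen2 (μ ∘ₗ πp)))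
    (μ : Module.Dual ℂ G) :
    (μ ∘ₗ πp = 0 →
      ψ (gen2 μ - deltaWith LinearMap.id b μ) =
        inc (gen2 μ - deltaWith LinearMap.id b μ) +
          (2 * t - t ^ 2) * inc (deltaWith πp b μ)) ∧
    (μ ∘ₗ πk = 0 →
      ψ (gen2 μ - deltaWith LinearMap.id b μ) =
        (1 - t) * inc (gen2 μ - deltaWith LinearMap.id b μ) - dt * inc (gen1 μ)) :=
  stmt13_general G πk πp hsum hkk hkp hpk hpp ιI b W t dt inc ht ψ hψ1 hψ2 μ
end

section
/- With P = (1/2^p) e_1⋯e_p f_p⋯f_1 as above, the map a ↦ P a P restricted to the subalgebra Cl(𝔞) ⊂ Cl(𝔭) is an injective (ℤ₂-graded) algebra homomorphism onto P·Cl(𝔞)·P; in particular, P commutes with every element of Cl(𝔞), P a P = aP for a ∈ Cl(𝔞), and the Harish-Chandra projection HC : Cl(𝔭) → Cl(𝔞) along 𝔭⁻Cl(𝔭) + Cl(𝔭)𝔭⁺ satisfies HC(a) = a for a ∈ Cl(𝔞). -/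
/-!
Write `π_i = e_i f_i`, so that `P = 2⁻ᵖ π_1 ⋯ π_p`. Since `e_i f_i + f_i e_i = 2` and `e_i² = 0`,
`π_i² = 2 π_i`; the `π_i` commute with each other, so `P` is idempotent. A vector of `𝔞`
anticommutes with every `e_i` and `f_i`, hence commutes with every `π_i`, and so `Cl(𝔞)`
commutes with `P`; everything except injectivity now follows from `P² = P`.

For injectivity, let `x` supercommute with `f_i` (`x f_i = f_i x̂`, `x̂` the grade involute).
If `x π_i = 0` then also `x̂ π_i = 0`, so `x f_i e_i f_i e_i = f_i x̂ e_i f_i e_i = 0`; as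
`(f_i e_i)² = 2 f_i e_i`, this gives `x f_i e_i = 0`, and adding, `2x = x(π_i + f_i e_i) = 0`.
Peeling off the `π_i` one at a time shows that `a ↦ aP` is injective on `Cl(𝔞)`. Finally
`P y = 0 = x P` for `y ∈ 𝔭⁻`, `x ∈ 𝔭⁺`, because `𝔭^±` are isotropic; so `z = a - HC(a)`, which
lies in `Cl(𝔞) ∩ (𝔭⁻Cl(𝔭) + Cl(𝔭)𝔭⁺)`, has `zP = PzP = 0`, whence `z = 0`.
-/

namespace CliffordAlgebra

open QuadraticMap

section General

variable {R M : Type*} [CommRing R] [AddCommGroup M] [Module R M] (Q : QuadraticForm R M)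

/-- The elements supercommuting with the odd element `ι Q u`: even ones commute with it, odd ones
anticommute. -/
def superCentralizer (u : M) : Subalgebra R (CliffordAlgebra Q) where
  carrier := {x | x * ι Q u = ι Q u * involute x}
  mul_mem' {x y} hx hy := by
    simp only [Set.mem_ofPred_eq, map_mul] at *
    rw [mul_assoc, hy, ← mul_assoc, hx, mul_assoc]
  add_mem' hx hy := by
    simp only [Set.mem_ofPred_eq, map_add, add_mul, mul_add] at *
    rw [hx, hy]
  algebraMap_mem' r := by
    simp only [Set.mem_ofPred_eq, AlgHom.commutes, Algebra.commutes]

variable {Q}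

theorem mem_superCentralizer {u : M} {x : CliffordAlgebra Q} :
    x ∈ superCentralizer Q u ↔ x * ι Q u = ι Q u * involute x :=
  Iff.rfl

theorem involute_mul_ι_of_mem_superCentralizer {u : M} {x : CliffordAlgebra Q}
    (hx : x ∈ superCentralizer Q u) : involute x * ι Q u = ι Q u * x := by
  have h := congrArg involute (mem_superCentralizer.mp hx)
  rwa [map_mul, map_mul, involute_involute, involute_ι, mul_neg, neg_mul, neg_inj] at h

theorem ι_mem_superCentralizer {u v : M} (h : Q.IsOrtho v u) : ι Q v ∈ superCentralizer Q u := by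
  rw [mem_superCentralizer, involute_ι, mul_neg, ι_mul_ι_comm_of_isOrtho h]

theorem commute_ι_mul_ι_of_mem_superCentralizer {u w : M} {x : CliffordAlgebra Q}
    (hu : x ∈ superCentralizer Q u) (hw : x ∈ superCentralizer Q w) :
    Commute (ι Q u * ι Q w) x := by
  rw [Commute, SemiconjBy, mul_assoc, ← involute_mul_ι_of_mem_superCentralizer hw, ← mul_assoc,
    ← mem_superCentralizer.mp hu, mul_assoc]

theorem ι_mul_ι_mul_self_eq_polar_smul {u : M} (hu : Q u = 0) (w : M) :
    ι Q u * ι Q w * (ι Q u * ι Q w) = polar Q u w • (ι Q u * ι Q w) := by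
  rw [← mul_assoc, ι_mul_ι_mul_ι, hu, zero_smul, sub_zero, map_smul, smul_mul_assoc]

theorem eq_zero_of_mul_ι_mul_ι_eq_zero {u w : M} (huw : IsUnit (polar Q u w)) (hw : Q w = 0)
    {x : CliffordAlgebra Q} (hxw : x ∈ superCentralizer Q w) (hx : x * (ι Q u * ι Q w) = 0) :
    x = 0 := by
  have hinv : involute x * (ι Q u * ι Q w) = 0 := by
    simpa only [map_mul, involute_ι, neg_mul_neg, map_zero] using congrArg involute hx
  have hswap : x * (ι Q w * ι Q u) = 0 := by
    refine huw.smul_eq_zero.mp ?_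
    calc polar Q u w • (x * (ι Q w * ι Q u))
        = x * ι Q w * (ι Q u * ι Q w) * ι Q u := by
          rw [polar_comm, ← mul_smul_comm, ← ι_mul_ι_mul_self_eq_polar_smul hw]
          simp only [mul_assoc]
      _ = ι Q w * (involute x * (ι Q u * ι Q w)) * ι Q u := by
          rw [mem_superCentralizer.mp hxw]; simp only [mul_assoc]
      _ = 0 := by rw [hinv, mul_zero, zero_mul]
  refine huw.smul_eq_zero.mp ?_
  rw [Algebra.smul_def, Algebra.commutes, ← ι_mul_ι_add_swap, mul_add, hx, hswap, add_zero]

theorem ι_mul_prod_map_ι_eq_zero {l : List M} (hl : l.Pairwise Q.IsOrtho)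
    (hQ : ∀ x ∈ l, Q x = 0) {v : M} (hv : v ∈ l) : ι Q v * (l.map (ι Q)).prod = 0 := by
  induction l with
  | nil => simp at hv
  | cons x t ih =>
    rw [List.map_cons, List.prod_cons]
    rcases List.mem_cons.mp hv with rfl | hvt
    · rw [← mul_assoc, ι_sq_scalar, hQ v List.mem_cons_self, map_zero, zero_mul]
    · rw [ι_mul_ι_mul_of_isOrtho _ (List.rel_of_pairwise_cons hl hvt).symm,
        ih hl.of_cons (fun y hy => hQ y (List.mem_cons_of_mem x hy)) hvt, mul_zero, neg_zero]

theorem prod_map_ι_mul_ι_eq_zero {l : List M} (hl : l.Pairwise Q.IsOrtho)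
    (hQ : ∀ x ∈ l, Q x = 0) {v : M} (hv : v ∈ l) : (l.map (ι Q)).prod * ι Q v = 0 := by
  have hrev : l.reverse.Pairwise Q.IsOrtho :=
    List.pairwise_reverse.mpr (hl.imp IsOrtho.symm)
  have h := congrArg reverse
    (ι_mul_prod_map_ι_eq_zero hrev (fun x hx => hQ x (List.mem_reverse.mp hx))
      (List.mem_reverse.mpr hv))
  rwa [reverse.map_mul, reverse_prod_map_ι, reverse_ι, List.map_reverse, List.reverse_reverse,
    map_zero] at h

theorem ι_mul_eq_zero_of_mem_span {s : Set M} {a : CliffordAlgebra Q}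
    (hs : ∀ v ∈ s, ι Q v * a = 0) {v : M} (hv : v ∈ Submodule.span R s) : ι Q v * a = 0 :=
  (Submodule.span_le (p := LinearMap.ker (LinearMap.mulRight R a ∘ₗ ι Q))).mpr hs hv

theorem mul_ι_eq_zero_of_mem_span {s : Set M} {a : CliffordAlgebra Q}
    (hs : ∀ v ∈ s, a * ι Q v = 0) {v : M} (hv : v ∈ Submodule.span R s) : a * ι Q v = 0 :=
  (Submodule.span_le (p := LinearMap.ker (LinearMap.mulLeft R a ∘ₗ ι Q))).mpr hs hv

end General

section Pairs

variable {R M n : Type*} [CommRing R] [AddCommGroup M] [Module R M] (Q : QuadraticForm R M)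

def pairProd (e f : n → M) (i : n) : CliffordAlgebra Q :=
  ι Q (e i) * ι Q (f i)

def pairCentralizer (e f : n → M) (i : n) : Subalgebra R (CliffordAlgebra Q) :=
  superCentralizer Q (e i) ⊓ superCentralizer Q (f i)

variable {Q}

theorem commute_pairProd_of_mem {e f : n → M} {i : n} {x : CliffordAlgebra Q}
    (hx : x ∈ pairCentralizer Q e f i) : Commute (pairProd Q e f i) x :=
  commute_ι_mul_ι_of_mem_superCentralizer hx.1 hx.2

theorem commute_prod_pairProd {e f : n → M} (l : List n) {x : CliffordAlgebra Q}
    (hx : ∀ i ∈ l, x ∈ pairCentralizer Q e f i) : Commute (l.map (pairProd Q e f)).prod x :=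
  Commute.list_prod_left _ _ <| by
    simp only [List.mem_map]
    rintro _ ⟨i, hi, rfl⟩
    exact commute_pairProd_of_mem (hx i hi)

end Pairs

end CliffordAlgebra

namespace LinearMap.BilinForm

open CliffordAlgebra QuadraticMap LinearMap.BilinMap

variable {R M n : Type*} [CommRing R] [AddCommGroup M] [Module R M] {B : LinearMap.BilinForm R M}
  {e f : n → M}

local notation "Q" => LinearMap.BilinMap.toQuadraticMap B

theorem IsSymm.isOrtho_toQuadraticMap_of_eq_zero (hB : B.IsSymm) {x y : M} (h : B x y = 0) :
    QuadraticMap.IsOrtho Q x y := by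
  rw [← isOrtho_polarBilin, polarBilin_apply_apply, polar_toQuadraticMap, h, ← hB.eq, h, add_zero]

theorem IsSymm.ι_mem_pairCentralizer (hB : B.IsSymm) {v : M} {i : n} (hve : B v (e i) = 0)
    (hvf : B v (f i) = 0) : ι Q v ∈ pairCentralizer Q e f i :=
  ⟨ι_mem_superCentralizer (hB.isOrtho_toQuadraticMap_of_eq_zero hve),
    ι_mem_superCentralizer (hB.isOrtho_toQuadraticMap_of_eq_zero hvf)⟩

theorem IsSymm.adjoin_le_pairCentralizer (hB : B.IsSymm) {s : Set M} {i : n}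
    (hs : ∀ v ∈ s, B v (e i) = 0 ∧ B v (f i) = 0) :
    Algebra.adjoin R (ι Q '' s) ≤ pairCentralizer Q e f i :=
  Algebra.adjoin_le <| by
    rintro _ ⟨v, hv, rfl⟩
    exact hB.ι_mem_pairCentralizer (hs v hv).1 (hs v hv).2

/-- Modelled on the isotropic bases `e_i` of `𝔭⁺` and `f_i` of `𝔭⁻`, in duality under `B`. -/
structure IsDualIsotropic [DecidableEq n] (B : LinearMap.BilinForm R M) (e f : n → M) : Prop where
  e_e : ∀ i j, B (e i) (e j) = 0
  f_f : ∀ i j, B (f i) (f j) = 0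
  e_f : ∀ i j, B (e i) (f j) = if i = j then 1 else 0

namespace IsDualIsotropic

variable [DecidableEq n] (h : IsDualIsotropic B e f) (hB : B.IsSymm)
include h hB

theorem ι_mem_pairCentralizer_of_ne {i j : n} (hji : j ≠ i) :
    ι Q (e j) ∈ pairCentralizer Q e f i ∧ ι Q (f j) ∈ pairCentralizer Q e f i :=
  ⟨hB.ι_mem_pairCentralizer (h.e_e j i) (by rw [h.e_f, if_neg hji]),
    hB.ι_mem_pairCentralizer (by rw [hB.eq, h.e_f, if_neg hji.symm]) (h.f_f j i)⟩

theorem pairProd_mem_pairCentralizer_of_ne {i j : n} (hji : j ≠ i) :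
    pairProd Q e f j ∈ pairCentralizer Q e f i :=
  mul_mem (h.ι_mem_pairCentralizer_of_ne hB hji).1 (h.ι_mem_pairCentralizer_of_ne hB hji).2

theorem polar_e_f (i : n) : QuadraticMap.polar Q (e i) (f i) = 2 := by
  rw [polar_toQuadraticMap, h.e_f, ← hB.eq, h.e_f, if_pos rfl, one_add_one_eq_two]

theorem pairProd_mul_self (i : n) :
    pairProd Q e f i * pairProd Q e f i = (2 : R) • pairProd Q e f i := by
  rw [pairProd, ι_mul_ι_mul_self_eq_polar_smul (by rw [toQuadraticMap_apply, h.e_e]),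
    h.polar_e_f hB]

theorem prod_ι_mul_prod_ι_reverse {l : List n} (hl : l.Nodup) :
    (l.map fun i => ι Q (e i)).prod * (l.reverse.map fun i => ι Q (f i)).prod =
      (l.map (pairProd Q e f)).prod := by
  induction l with
  | nil => simp
  | cons x t ih =>
    obtain ⟨hxt, ht⟩ := List.nodup_cons.mp hl
    have hcomm : Commute (t.map (pairProd Q e f)).prod (ι Q (f x)) :=
      commute_prod_pairProd t fun j hj =>
        (h.ι_mem_pairCentralizer_of_ne hB (ne_of_mem_of_not_mem hj hxt).symm).2
    simp only [List.map_cons, List.prod_cons, List.reverse_cons, List.map_append,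
      List.prod_append, List.map_nil, List.prod_nil, mul_one]
    rw [mul_assoc, ← mul_assoc _ _ (ι Q (f x)), ih ht, hcomm.eq, ← mul_assoc, pairProd]

theorem prod_pairProd_mul_self {l : List n} (hl : l.Nodup) :
    (l.map (pairProd Q e f)).prod * (l.map (pairProd Q e f)).prod =
      (2 : R) ^ l.length • (l.map (pairProd Q e f)).prod := by
  induction l with
  | nil => simp
  | cons x t ih =>
    obtain ⟨hxt, ht⟩ := List.nodup_cons.mp hl
    have hcomm : Commute (t.map (pairProd Q e f)).prod (pairProd Q e f x) :=
      commute_prod_pairProd t fun j hj =>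
        h.pairProd_mem_pairCentralizer_of_ne hB (ne_of_mem_of_not_mem hj hxt).symm
    simp only [List.map_cons, List.prod_cons, List.length_cons]
    rw [hcomm.mul_mul_mul_comm, h.pairProd_mul_self hB, ih ht, smul_mul_smul_comm, pow_succ']

theorem eq_zero_of_mul_prod_pairProd_eq_zero (h2 : IsUnit (2 : R)) {l : List n} (hl : l.Nodup)
    {x : CliffordAlgebra Q} (hx : ∀ i ∈ l, x ∈ superCentralizer Q (f i))
    (hx0 : x * (l.map (pairProd Q e f)).prod = 0) : x = 0 := by
  induction l generalizing x with
  | nil => simpa using hx0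
  | cons i t ih =>
    obtain ⟨hit, ht⟩ := List.nodup_cons.mp hl
    rw [List.map_cons, List.prod_cons, ← mul_assoc] at hx0
    have hxi : x * pairProd Q e f i = 0 :=
      ih ht (fun j hj => mul_mem (hx j (List.mem_cons_of_mem i hj))
        (h.pairProd_mem_pairCentralizer_of_ne hB (ne_of_mem_of_not_mem hj hit).symm).2) hx0
    exact eq_zero_of_mul_ι_mul_ι_eq_zero (h.polar_e_f hB i ▸ h2)
      (by rw [toQuadraticMap_apply, h.f_f]) (hx i List.mem_cons_self) hxi

theorem ι_mul_prod_pairProd_eq_zero {l : List n} (hl : l.Nodup) (hmem : ∀ i, i ∈ l) {v : M}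
    (hv : v ∈ Submodule.span R (Set.range e)) : ι Q v * (l.map (pairProd Q e f)).prod = 0 := by
  refine ι_mul_eq_zero_of_mem_span ?_ hv
  rintro _ ⟨j, rfl⟩
  have hE : ι Q (e j) * ((l.map e).map (ι Q)).prod = 0 :=
    ι_mul_prod_map_ι_eq_zero
      (List.pairwise_map.mpr (List.pairwise_of_forall fun i k =>
        hB.isOrtho_toQuadraticMap_of_eq_zero (h.e_e i k)))
      (by simp only [List.mem_map]; rintro _ ⟨i, -, rfl⟩; exact h.e_e i i)
      (List.mem_map_of_mem (hmem j))
  rw [List.map_map] at hE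
  rw [← h.prod_ι_mul_prod_ι_reverse hB hl, ← mul_assoc]
  exact (congrArg (· * _) hE).trans (zero_mul _)

theorem prod_pairProd_mul_ι_eq_zero {l : List n} (hl : l.Nodup) (hmem : ∀ i, i ∈ l) {v : M}
    (hv : v ∈ Submodule.span R (Set.range f)) : (l.map (pairProd Q e f)).prod * ι Q v = 0 := by
  refine mul_ι_eq_zero_of_mem_span ?_ hv
  rintro _ ⟨j, rfl⟩
  have hF : ((l.reverse.map f).map (ι Q)).prod * ι Q (f j) = 0 :=
    prod_map_ι_mul_ι_eq_zero
      (List.pairwise_map.mpr (List.pairwise_of_forall fun i k =>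
        hB.isOrtho_toQuadraticMap_of_eq_zero (h.f_f i k)))
      (by simp only [List.mem_map]; rintro _ ⟨i, -, rfl⟩; exact h.f_f i i)
      (List.mem_map_of_mem (List.mem_reverse.mpr (hmem j)))
  rw [List.map_map] at hF
  rw [← h.prod_ι_mul_prod_ι_reverse hB hl, mul_assoc]
  exact (congrArg (_ * ·) hF).trans (mul_zero _)

theorem prod_pairProd_mul_mul_prod_pairProd_eq_zero {l : List n} (hl : l.Nodup)
    (hmem : ∀ i, i ∈ l) {z : CliffordAlgebra Q}
    (hz : z ∈ Submodule.span R
      ({z | ∃ y ∈ Submodule.span R (Set.range f), ∃ c, z = ι Q y * c} ∪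
       {z | ∃ x ∈ Submodule.span R (Set.range e), ∃ c, z = c * ι Q x})) :
    (l.map (pairProd Q e f)).prod * z * (l.map (pairProd Q e f)).prod = 0 := by
  set π := (l.map (pairProd Q e f)).prod
  refine (Submodule.span_le (p := LinearMap.ker
    (LinearMap.mulRight R π ∘ₗ LinearMap.mulLeft R π))).mpr ?_ hz
  rintro _ (⟨y, hy, c, rfl⟩ | ⟨x, hx, c, rfl⟩) <;>
    simp only [SetLike.mem_coe, LinearMap.mem_ker, LinearMap.comp_apply, LinearMap.mulLeft_apply,
      LinearMap.mulRight_apply, ← mul_assoc]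
  · rw [h.prod_pairProd_mul_ι_eq_zero hB hl hmem hy, zero_mul, zero_mul]
  · rw [mul_assoc _ (ι Q x), h.ι_mul_prod_pairProd_eq_zero hB hl hmem hx, mul_zero]

theorem isIdempotentElem_smul_prod_pairProd {l : List n} (hl : l.Nodup) {c : R}
    (hc : c * 2 ^ l.length = 1) : IsIdempotentElem (c • (l.map (pairProd Q e f)).prod) := by
  rw [IsIdempotentElem, smul_mul_smul_comm, h.prod_pairProd_mul_self hB hl, smul_smul, mul_assoc,
    hc, mul_one]

end IsDualIsotropic

end LinearMap.BilinForm

theorem stmt16_general (P : Type*) [AddCommGroup P] [Module ℂ P]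
    (B : LinearMap.BilinForm ℂ P) (hsymm : B.IsSymm)
    (p : ℕ) (e f : Fin p → P) (a : Submodule ℂ P)
    (he : ∀ i j, B (e i) (e j) = 0) (hf : ∀ i j, B (f i) (f j) = 0)
    (hef : ∀ i j, B (e i) (f j) = if i = j then 1 else 0)
    (hae : ∀ x ∈ a, ∀ i, B x (e i) = 0) (haf : ∀ x ∈ a, ∀ i, B x (f i) = 0)
    (Pw : CliffordAlgebra (LinearMap.BilinMap.toQuadraticMap B))
    (hPw : Pw = ((1 : ℂ) / 2 ^ p) •
      (((List.finRange p).map fun i =>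
          CliffordAlgebra.ι (LinearMap.BilinMap.toQuadraticMap B) (e i)).prod *
       ((List.finRange p).reverse.map fun i =>
          CliffordAlgebra.ι (LinearMap.BilinMap.toQuadraticMap B) (f i)).prod))
    (ClA : Subalgebra ℂ (CliffordAlgebra (LinearMap.BilinMap.toQuadraticMap B)))
    (hClA : ClA = Algebra.adjoin ℂ
      (CliffordAlgebra.ι (LinearMap.BilinMap.toQuadraticMap B) '' (a : Set P)))
    (N : Submodule ℂ (CliffordAlgebra (LinearMap.BilinMap.toQuadraticMap B)))
    (hN : N = Submodule.span ℂ
      ({z | ∃ y ∈ Submodule.span ℂ (Set.range f),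
          ∃ c, z = CliffordAlgebra.ι (LinearMap.BilinMap.toQuadraticMap B) y * c} ∪
       {z | ∃ x ∈ Submodule.span ℂ (Set.range e),
          ∃ c, z = c * CliffordAlgebra.ι (LinearMap.BilinMap.toQuadraticMap B) x})) :
    (∀ x ∈ ClA, Commute Pw x) ∧
    (∀ x ∈ ClA, Pw * x * Pw = x * Pw) ∧
    (∀ x ∈ ClA, ∀ y ∈ ClA, Pw * x * Pw = Pw * y * Pw → x = y) ∧
    (∀ x ∈ ClA, ∀ y ∈ ClA, (Pw * x * Pw) * (Pw * y * Pw) = Pw * (x * y) * Pw) ∧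
    (∀ HC : CliffordAlgebra (LinearMap.BilinMap.toQuadraticMap B) →ₗ[ℂ]
        CliffordAlgebra (LinearMap.BilinMap.toQuadraticMap B),
      (∀ x, HC x ∈ ClA) → (∀ x, x - HC x ∈ N) → ∀ x ∈ ClA, HC x = x) := by
  have hdual : LinearMap.BilinForm.IsDualIsotropic B e f := ⟨he, hf, hef⟩
  have hl := List.nodup_finRange p
  have hmem := List.mem_finRange (n := p)
  rw [hdual.prod_ι_mul_prod_ι_reverse hsymm hl] at hPw
  have hA : ∀ x ∈ ClA, ∀ i ∈ List.finRange p, x ∈ CliffordAlgebra.pairCentralizer _ e f i :=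
    fun x hx i _ =>
      hsymm.adjoin_le_pairCentralizer (fun v hv => ⟨hae v hv i, haf v hv i⟩) (hClA ▸ hx)
  have hcomm : ∀ x ∈ ClA, Commute Pw x := fun x hx =>
    hPw ▸ (CliffordAlgebra.commute_prod_pairProd _ (hA x hx)).smul_left _
  have hidem : IsIdempotentElem Pw := by
    rw [hPw]
    exact hdual.isIdempotentElem_smul_prod_pairProd hsymm hl
      (by rw [List.length_finRange, one_div_mul_cancel (pow_ne_zero p two_ne_zero)])
  have hPxP : ∀ x ∈ ClA, Pw * x * Pw = x * Pw := fun x hx => by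
    rw [(hcomm x hx).eq, mul_assoc, hidem.eq]
  have hinj : ∀ x ∈ ClA, x * Pw = 0 → x = 0 := fun x hx hx0 => by
    rw [hPw, mul_smul_comm, smul_eq_zero] at hx0
    exact hdual.eq_zero_of_mul_prod_pairProd_eq_zero hsymm (by norm_num) hl
      (fun i hi => (hA x hx i hi).2) (hx0.resolve_left (by simp))
  refine ⟨hcomm, hPxP, fun x hx y hy hxy => ?_, fun x hx y hy => ?_, fun HC hHC hHCN x hx => ?_⟩
  · rw [hPxP x hx, hPxP y hy] at hxy
    exact sub_eq_zero.mp (hinj _ (sub_mem hx hy) (by rw [sub_mul, hxy, sub_self]))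
  · rw [hPxP x hx, hPxP y hy, hPxP _ (mul_mem hx hy), mul_assoc, ← mul_assoc Pw, hPxP y hy,
      mul_assoc]
  · have hz : x - HC x ∈ ClA := sub_mem hx (hHC x)
    refine (sub_eq_zero.mp (hinj _ hz ?_)).symm
    rw [← hPxP _ hz, hPw, smul_mul_assoc, mul_smul_comm, smul_mul_assoc,
      hdual.prod_pairProd_mul_mul_prod_pairProd_eq_zero hsymm hl hmem (hN ▸ hHCN x), smul_zero,
      smul_zero]

/-- With `𝔭 = 𝔭⁺ ⊕ 𝔞 ⊕ 𝔭⁻` and `P = (1/2^p) e₁⋯e_p f_p⋯f₁ ∈ Cl(𝔭)` as in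
Statement 15 (`e`, `f` dual isotropic bases of `𝔭⁺`, `𝔭⁻`, and `𝔞` orthogonal to both, with
`B` nondegenerate on `𝔞` and on `𝔭`), the map `a ↦ P a P` restricted to the subalgebra
`Cl(𝔞) ⊆ Cl(𝔭)` generated by `𝔞` is an injective (ℤ₂-graded) algebra homomorphism onto
`P·Cl(𝔞)·P`; in particular `P` commutes with every element of `Cl(𝔞)`, `P a P = a P` for
`a ∈ Cl(𝔞)`, and any Harish-Chandra projection `HC : Cl(𝔭) → Cl(𝔞)` along
`𝔭⁻ Cl(𝔭) + Cl(𝔭) 𝔭⁺` satisfies `HC(a) = a` for `a ∈ Cl(𝔞)`. -/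
theorem stmt16 (P : Type*) [AddCommGroup P] [Module ℂ P] [FiniteDimensional ℂ P]
    (B : LinearMap.BilinForm ℂ P) (hsymm : B.IsSymm) (hnd : B.Nondegenerate)
    (p : ℕ) (e f : Fin p → P) (a : Submodule ℂ P)
    (he : ∀ i j, B (e i) (e j) = 0) (hf : ∀ i j, B (f i) (f j) = 0)
    (hef : ∀ i j, B (e i) (f j) = if i = j then 1 else 0)
    (hae : ∀ x ∈ a, ∀ i, B x (e i) = 0) (haf : ∀ x ∈ a, ∀ i, B x (f i) = 0)
    (hande : ∀ x ∈ a, (∀ y ∈ a, B x y = 0) → x = 0)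
    (hspan : a ⊔ Submodule.span ℂ (Set.range e) ⊔ Submodule.span ℂ (Set.range f) = ⊤)
    (Pw : CliffordAlgebra (LinearMap.BilinMap.toQuadraticMap B))
    (hPw : Pw = ((1 : ℂ) / 2 ^ p) •
      (((List.finRange p).map fun i =>
          CliffordAlgebra.ι (LinearMap.BilinMap.toQuadraticMap B) (e i)).prod *
       ((List.finRange p).reverse.map fun i =>
          CliffordAlgebra.ι (LinearMap.BilinMap.toQuadraticMap B) (f i)).prod))
    (ClA : Subalgebra ℂ (CliffordAlgebra (LinearMap.BilinMap.toQuadraticMap B)))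
    (hClA : ClA = Algebra.adjoin ℂ
      (CliffordAlgebra.ι (LinearMap.BilinMap.toQuadraticMap B) '' (a : Set P)))
    (N : Submodule ℂ (CliffordAlgebra (LinearMap.BilinMap.toQuadraticMap B)))
    (hN : N = Submodule.span ℂ
      ({z | ∃ y ∈ Submodule.span ℂ (Set.range f),
          ∃ c, z = CliffordAlgebra.ι (LinearMap.BilinMap.toQuadraticMap B) y * c} ∪
       {z | ∃ x ∈ Submodule.span ℂ (Set.range e),
          ∃ c, z = c * CliffordAlgebra.ι (LinearMap.BilinMap.toQuadraticMap B) x})) :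
    (∀ x ∈ ClA, Commute Pw x) ∧
    (∀ x ∈ ClA, Pw * x * Pw = x * Pw) ∧
    (∀ x ∈ ClA, ∀ y ∈ ClA, Pw * x * Pw = Pw * y * Pw → x = y) ∧
    (∀ x ∈ ClA, ∀ y ∈ ClA, (Pw * x * Pw) * (Pw * y * Pw) = Pw * (x * y) * Pw) ∧
    (∀ HC : CliffordAlgebra (LinearMap.BilinMap.toQuadraticMap B) →ₗ[ℂ]
        CliffordAlgebra (LinearMap.BilinMap.toQuadraticMap B),
      (∀ x, HC x ∈ ClA) → (∀ x, x - HC x ∈ N) → ∀ x ∈ ClA, HC x = x) :=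
  stmt16_general P B hsymm p e f a he hf hef hae haf Pw hPw ClA hClA N hN
end
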